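/- (Theorem 2: Double is (4 − 2^{−D})-competitive on paths) For every MLAPD instance of depth D whose tree is a path, i.e. the nodes can be enumerated r = u_1, u_2, …, u_D with par u_{i+1} = u_i, the cost of the schedule produced by the Double algorithm is at most (4 − 2^{−D}) times the cost of every feasible schedule of the instance. -/

import Mathlib

open Classical

variable {V : Type} [Fintype V] [DecidableEq V] {Req : Type} [Fintype Req]

/-- The root path of `v`: the set of nodes of the form `par^[n] v`, i.e. `v` and its ancestors. -/
noncomputable def rootPath (par : V → V) (v : V) : Finset V :=
  Finset.univ.filter (fun u => ∃ n : ℕ, par^[n] v = u)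

/-- The level of a node: the cardinality of its root path (the root has level 1). -/
noncomputable def level (par : V → V) (v : V) : ℕ :=
  (rootPath par v).card

/-- The depth `D` of the instance: the maximum level over all nodes. -/
noncomputable def depth (par : V → V) : ℕ :=
  Finset.univ.sup (level par)

/-- A valid service tree: contains the root and is closed under the parent map. -/
def IsServiceTree (r : V) (par : V → V) (S : Finset V) : Prop :=
  r ∈ S ∧ ∀ u ∈ S, par u ∈ S

/-- A service `(S, t)` satisfies a request `ρ` if the node of `ρ` lies in `S`
and `t` lies in the time window `[arr ρ, dl ρ]`. -/
def SatisfiedBy (node : Req → V) (arr dl : Req → ℝ) (S : Finset V) (t : ℝ) (ρ : Req) : Prop :=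
  node ρ ∈ S ∧ arr ρ ≤ t ∧ t ≤ dl ρ

/-- The cost of a service subtree. -/
noncomputable def serviceCost (c : V → ℝ) (S : Finset V) : ℝ :=
  ∑ u ∈ S, c u

/-- The cost of a schedule: the sum of the costs of its services. -/
noncomputable def scheduleCost (c : V → ℝ) (sched : List (Finset V × ℝ)) : ℝ :=
  (sched.map fun s => serviceCost c s.1).sum

/-- A schedule is feasible if each of its members is a valid service and every
request is satisfied by some service of the schedule. -/
def Feasible (r : V) (par : V → V) (node : Req → V) (arr dl : Req → ℝ)
    (sched : List (Finset V × ℝ)) : Prop :=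
  (∀ s ∈ sched, IsServiceTree r par s.1) ∧
  ∀ ρ : Req, ∃ s ∈ sched, SatisfiedBy node arr dl s.1 s.2 ρ

/-- The list of all requests, sorted in increasing order of deadline. -/
noncomputable def sortedReqs (dl : Req → ℝ) : List Req :=
  (Finset.univ : Finset Req).toList.mergeSort (fun a b => decide (dl a ≤ dl b))


/-- The inner loop constructing a service of the Double algorithm, at time `t`
with budget bound `B` (the cost of the root path of the triggering request):
requests are considered in increasing deadline order; a request `γ` that has arrived
by `t`, is not satisfied by any earlier Double service (`prior`), and is not satisfied
by the current tentative service `(S, t)`, has the missing part of its root path added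
to `S`, unless this would make the cost of the service exceed `2 * B`, in which case
the construction stops. -/
noncomputable def doubleServiceAux (par : V → V) (c : V → ℝ)
    (node : Req → V) (arr dl : Req → ℝ)
    (prior : List (Finset V × ℝ)) (t B : ℝ) :
    List Req → Finset V → Finset V
  | [], S => S
  | γ :: rest, S =>
    if arr γ ≤ t ∧ (∀ s ∈ prior, ¬ SatisfiedBy node arr dl s.1 s.2 γ) ∧
        ¬ SatisfiedBy node arr dl S t γ then
      if 2 * B < serviceCost c S + ∑ u ∈ rootPath par (node γ) \ S, c u then
        S
      else
        doubleServiceAux par c node arr dl prior t B rest (S ∪ rootPath par (node γ))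
    else
      doubleServiceAux par c node arr dl prior t B rest S

/-- The Double algorithm: when the deadline of a still-unsatisfied request `ρ` is reached,
it transmits the service built from `P(v(ρ))` by greedily extending it towards the most
urgent unsatisfied requests as long as the cost stays within twice the cost of `P(v(ρ))`. -/
noncomputable def doubleAux (par : V → V) (c : V → ℝ)
    (node : Req → V) (arr dl : Req → ℝ) :
    List Req → List (Finset V × ℝ) → List (Finset V × ℝ)
  | [], acc => acc
  | ρ :: rest, acc =>
    if ∃ s ∈ acc, SatisfiedBy node arr dl s.1 s.2 ρ then
      doubleAux par c node arr dl rest acc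
    else
      doubleAux par c node arr dl rest
        (acc ++ [(doubleServiceAux par c node arr dl acc (dl ρ)
            (serviceCost c (rootPath par (node ρ))) (sortedReqs dl) (rootPath par (node ρ)),
          dl ρ)])

/-- The schedule produced by the Double algorithm. -/
noncomputable def double (par : V → V) (c : V → ℝ)
    (node : Req → V) (arr dl : Req → ℝ) : List (Finset V × ℝ) :=
  doubleAux par c node arr dl (sortedReqs dl) []

set_option linter.unusedSectionVars false

section Basics
variable {par : V → V} {c : V → ℝ} {r v u w : V}

lemma mem_rootPath : u ∈ rootPath par v ↔ ∃ n : ℕ, par^[n] v = u := by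
  simp [rootPath]

lemma self_mem_rootPath (par : V → V) (v : V) : v ∈ rootPath par v :=
  mem_rootPath.2 ⟨0, rfl⟩

lemma par_mem_rootPath (h : u ∈ rootPath par v) : par u ∈ rootPath par v := by
  obtain ⟨n, rfl⟩ := mem_rootPath.1 h
  exact mem_rootPath.2 ⟨n + 1, Function.iterate_succ_apply' par n v⟩

lemma rootPath_subset_of_mem (h : u ∈ rootPath par v) :
    rootPath par u ⊆ rootPath par v := by
  intro w hw
  obtain ⟨n, rfl⟩ := mem_rootPath.1 h
  obtain ⟨m, rfl⟩ := mem_rootPath.1 hw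
  exact mem_rootPath.2 ⟨m + n, (Function.iterate_add_apply par m n v)⟩

lemma rootPath_subset_closed {S : Finset V} (hS : ∀ u ∈ S, par u ∈ S) (hv : v ∈ S) :
    rootPath par v ⊆ S := by
  intro w hw
  obtain ⟨n, rfl⟩ := mem_rootPath.1 hw
  clear hw
  induction n with
  | zero => exact hv
  | succ k ih => rw [Function.iterate_succ_apply']; exact hS _ ih

lemma root_mem_rootPath (hreach : ∀ v : V, ∃ n : ℕ, par^[n] v = r) (v : V) :
    r ∈ rootPath par v := by
  obtain ⟨n, hn⟩ := hreach v
  exact mem_rootPath.2 ⟨n, hn⟩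

lemma level_le_depth (par : V → V) (v : V) : level par v ≤ depth par :=
  Finset.le_sup (Finset.mem_univ v)

lemma one_le_level (par : V → V) (v : V) : 1 ≤ level par v :=
  Finset.card_pos.2 ⟨v, self_mem_rootPath par v⟩

lemma serviceCost_nonneg (hc : ∀ v, 0 < c v) (S : Finset V) : 0 ≤ serviceCost c S :=
  Finset.sum_nonneg fun u _ => (hc u).le

lemma serviceCost_mono (hc : ∀ v, 0 < c v) {S T : Finset V} (h : S ⊆ T) :
    serviceCost c S ≤ serviceCost c T :=
  Finset.sum_le_sum_of_subset_of_nonneg h fun u _ _ => (hc u).le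

lemma serviceCost_pos (hc : ∀ v, 0 < c v) {S : Finset V} (h : S.Nonempty) :
    0 < serviceCost c S :=
  Finset.sum_pos (fun u _ => hc u) h

lemma serviceCost_union (c : V → ℝ) (S T : Finset V) :
    serviceCost c (S ∪ T) = serviceCost c S + ∑ u ∈ T \ S, c u := by
  rw [serviceCost, serviceCost, ← Finset.sum_union (Finset.disjoint_sdiff),
    Finset.union_sdiff_self_eq_union]

lemma serviceCost_eq_of_subset (c : V → ℝ) {S T : Finset V} (h : S ⊆ T) :
    serviceCost c S + ∑ u ∈ T \ S, c u = serviceCost c T := by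
  rw [serviceCost, serviceCost, add_comm, Finset.sum_sdiff h]

end Basics

section Path
variable {par : V → V} {r : V}

lemma path_iterate {u : ℕ → V}
    (hpar : ∀ i : ℕ, i + 1 < depth par → par (u (i + 1)) = u i)
    {i : ℕ} (hi : i < depth par) : ∀ j, j ≤ i → par^[j] (u i) = u (i - j) := by
  intro j
  induction j with
  | zero => simp
  | succ k ih =>
    intro hk
    rw [Function.iterate_succ_apply', ih (Nat.le_of_succ_le hk)]
    have h1 : i - k = (i - (k + 1)) + 1 := by omega
    rw [h1, hpar _ (by omega)]

lemma rootPath_comparable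
    (hpath : ∃ u : ℕ → V, u 0 = r ∧
      (∀ i : ℕ, i + 1 < depth par → par (u (i + 1)) = u i) ∧
      (∀ i j : ℕ, i < depth par → j < depth par → u i = u j → i = j) ∧
      (∀ v : V, ∃ i : ℕ, i < depth par ∧ u i = v)) (v w : V) :
    v ∈ rootPath par w ∨ w ∈ rootPath par v := by
  obtain ⟨u, -, hpar, -, hsurj⟩ := hpath
  obtain ⟨i, hi, rfl⟩ := hsurj v
  obtain ⟨j, hj, rfl⟩ := hsurj w
  rcases le_total i j with h | h
  · left
    refine mem_rootPath.2 ⟨j - i, ?_⟩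
    rw [path_iterate hpar hj _ (Nat.sub_le j i)]
    congr 1; omega
  · right
    refine mem_rootPath.2 ⟨i - j, ?_⟩
    rw [path_iterate hpar hi _ (Nat.sub_le i j)]
    congr 1; omega

end Path

section DSA
variable {par : V → V} {c : V → ℝ} {node : Req → V} {arr dl : Req → ℝ}
  {prior : List (Finset V × ℝ)} {t B : ℝ}

lemma dsa_subset : ∀ (l : List Req) (S : Finset V),
    S ⊆ doubleServiceAux par c node arr dl prior t B l S := by
  intro l
  induction l with
  | nil => intro S; rw [doubleServiceAux]
  | cons x rest ih =>
    intro S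
    rw [doubleServiceAux]
    split
    · split
      · rfl
      · exact (Finset.subset_union_left).trans (ih _)
    · exact ih S

lemma dsa_closed : ∀ (l : List Req) (S : Finset V), (∀ u ∈ S, par u ∈ S) →
    ∀ u ∈ doubleServiceAux par c node arr dl prior t B l S,
      par u ∈ doubleServiceAux par c node arr dl prior t B l S := by
  intro l
  induction l with
  | nil => intro S hS; rw [doubleServiceAux]; exact hS
  | cons x rest ih =>
    intro S hS
    rw [doubleServiceAux]
    split
    · split
      · exact hS
      · refine ih _ fun u hu => ?_
        rcases Finset.mem_union.1 hu with h | h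
        · exact Finset.mem_union_left _ (hS u h)
        · exact Finset.mem_union_right _ (par_mem_rootPath h)
    · exact ih S hS

lemma dsa_cost : ∀ (l : List Req) (S : Finset V), serviceCost c S ≤ 2 * B →
    serviceCost c (doubleServiceAux par c node arr dl prior t B l S) ≤ 2 * B := by
  intro l
  induction l with
  | nil => intro S hS; rw [doubleServiceAux]; exact hS
  | cons x rest ih =>
    intro S hS
    rw [doubleServiceAux]
    split
    · split
      · exact hS
      · next h =>
          refine ih _ ?_
          rw [serviceCost_union]
          exact not_lt.1 h
    · exact ih S hS

lemma dsa_witness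
    (hcomp : ∀ v w : V, v ∈ rootPath par w ∨ w ∈ rootPath par v) :
    ∀ (l : List Req), l.Pairwise (fun a b => dl a ≤ dl b) →
    ∀ (S : Finset V), (∀ u ∈ S, par u ∈ S) → serviceCost c S ≤ 2 * B →
    ∀ γ ∈ l, arr γ ≤ t → t ≤ dl γ →
    (∀ s ∈ prior, ¬ SatisfiedBy node arr dl s.1 s.2 γ) →
    ¬ SatisfiedBy node arr dl (doubleServiceAux par c node arr dl prior t B l S) t γ →
    ∃ γ' ∈ l, arr γ' ≤ t ∧ (∀ s ∈ prior, ¬ SatisfiedBy node arr dl s.1 s.2 γ') ∧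
      ¬ SatisfiedBy node arr dl (doubleServiceAux par c node arr dl prior t B l S) t γ' ∧
      dl γ' ≤ dl γ ∧ 2 * B < ∑ u ∈ rootPath par (node γ'), c u := by
  intro l
  induction l with
  | nil => intro _ S _ _ γ hγ; exact absurd hγ List.not_mem_nil
  | cons x rest ih =>
    intro hsort S hcl hcost γ hγ harrγ htγ hprior hres
    rw [doubleServiceAux] at hres ⊢
    by_cases hcond : arr x ≤ t ∧ (∀ s ∈ prior, ¬SatisfiedBy node arr dl s.1 s.2 x) ∧
        ¬SatisfiedBy node arr dl S t x
    · rw [if_pos hcond] at hres ⊢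
      by_cases hbud : 2 * B < serviceCost c S + ∑ u ∈ rootPath par (node x) \ S, c u
      · rw [if_pos hbud] at hres ⊢
        -- the construction stopped here with result S; x is the witness
        have hxnot : node x ∉ S := by
          intro hmem
          have hPS : rootPath par (node x) \ S = ∅ :=
            Finset.sdiff_eq_empty_iff_subset.2 (rootPath_subset_closed hcl hmem)
          rw [hPS] at hbud
          simp only [Finset.sum_empty, add_zero] at hbud
          exact absurd hcost (not_le.2 hbud)
        have hSP : S ⊆ rootPath par (node x) := by
          intro w hw
          rcases hcomp w (node x) with h | h
          · exact h
          · exact absurd (rootPath_subset_closed hcl hw h) hxnot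
        refine ⟨x, List.mem_cons_self, hcond.1, hcond.2.1, hcond.2.2, ?_, ?_⟩
        · rcases List.mem_cons.1 hγ with rfl | hγ'
          · exact le_refl _
          · exact (List.pairwise_cons.1 hsort).1 γ hγ'
        · calc 2 * B < serviceCost c S + ∑ u ∈ rootPath par (node x) \ S, c u := hbud
            _ = ∑ u ∈ rootPath par (node x), c u := serviceCost_eq_of_subset c hSP
      · rw [if_neg hbud] at hres ⊢
        -- x was added; recurse
        have hγrest : γ ∈ rest := by
          rcases List.mem_cons.1 hγ with rfl | hγ'
          · exfalso
            exact hres ⟨dsa_subset rest _ (Finset.mem_union_right _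
              (self_mem_rootPath par (node γ))), harrγ, htγ⟩
          · exact hγ'
        have hcl' : ∀ u ∈ S ∪ rootPath par (node x), par u ∈ S ∪ rootPath par (node x) := by
          intro u hu
          rcases Finset.mem_union.1 hu with h | h
          · exact Finset.mem_union_left _ (hcl u h)
          · exact Finset.mem_union_right _ (par_mem_rootPath h)
        have hcost' : serviceCost c (S ∪ rootPath par (node x)) ≤ 2 * B := by
          rw [serviceCost_union]; exact not_lt.1 hbud
        obtain ⟨γ', hγ'mem, h1, h2, h3, h4, h5⟩ :=
          ih (List.pairwise_cons.1 hsort).2 _ hcl' hcost' γ hγrest harrγ htγ hprior hres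
        exact ⟨γ', List.mem_cons_of_mem x hγ'mem, h1, h2, h3, h4, h5⟩
    · rw [if_neg hcond] at hres ⊢
      have hγrest : γ ∈ rest := by
        rcases List.mem_cons.1 hγ with rfl | hγ'
        · exfalso
          refine hcond ⟨harrγ, hprior, fun hS => hres ?_⟩
          exact ⟨dsa_subset rest S hS.1, harrγ, htγ⟩
        · exact hγ'
      obtain ⟨γ', hγ'mem, h1, h2, h3, h4, h5⟩ :=
        ih (List.pairwise_cons.1 hsort).2 S hcl hcost γ hγrest harrγ htγ hprior hres
      exact ⟨γ', List.mem_cons_of_mem x hγ'mem, h1, h2, h3, h4, h5⟩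

end DSA

section Sorted
variable {dl : Req → ℝ}

lemma mem_sortedReqs (dl : Req → ℝ) (ρ : Req) : ρ ∈ sortedReqs dl := by
  rw [sortedReqs, (List.mergeSort_perm _ _).mem_iff, Finset.mem_toList]
  exact Finset.mem_univ ρ

lemma sortedReqs_sorted (dl : Req → ℝ) :
    (sortedReqs dl).Pairwise (fun a b => dl a ≤ dl b) := by
  have := List.pairwise_mergeSort (le := fun a b : Req => decide (dl a ≤ dl b))
    (fun a b c hab hbc => by
      simp only [decide_eq_true_eq] at *; exact le_trans hab hbc)
    (fun a b => by
      simp only [Bool.or_eq_true, decide_eq_true_eq]; exact le_total (dl a) (dl b))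
    ((Finset.univ : Finset Req).toList)
  exact this.imp (by simp)

lemma sortedReqs_nodup (dl : Req → ℝ) : (sortedReqs dl).Nodup :=
  (List.mergeSort_perm _ _).nodup_iff.2 (Finset.nodup_toList _)

lemma sortedReqs_strict (hdl : Function.Injective dl) :
    (sortedReqs dl).Pairwise (fun a b => dl a < dl b) := by
  have h := (sortedReqs_sorted dl).and (sortedReqs_nodup dl)
  exact h.imp fun ⟨h1, h2⟩ => lt_of_le_of_ne h1 fun he => h2 (hdl he)

end Sorted

/-- The invariant satisfied by schedules produced by the Double algorithm. -/
def GoodSched (par : V → V) (c : V → ℝ) (node : Req → V) (arr dl : Req → ℝ)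
    (sched : List (Finset V × ℝ)) : Prop :=
  sched.Pairwise (fun s s' => s.2 < s'.2) ∧
  ∀ i (hi : i < sched.length), ∃ ρ : Req,
    (sched.get ⟨i, hi⟩).2 = dl ρ ∧
    (∀ s ∈ sched.take i, ¬ SatisfiedBy node arr dl s.1 s.2 ρ) ∧
    (sched.get ⟨i, hi⟩).1 = doubleServiceAux par c node arr dl (sched.take i) (dl ρ)
        (serviceCost c (rootPath par (node ρ))) (sortedReqs dl) (rootPath par (node ρ))

section DA
variable {par : V → V} {c : V → ℝ} {node : Req → V} {arr dl : Req → ℝ}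

lemma doubleAux_append : ∀ (l : List Req) (acc : List (Finset V × ℝ)),
    ∃ rest, doubleAux par c node arr dl l acc = acc ++ rest := by
  intro l
  induction l with
  | nil => intro acc; exact ⟨[], by rw [doubleAux, List.append_nil]⟩
  | cons ρ tl ih =>
    intro acc
    rw [doubleAux]
    split
    · exact ih acc
    · obtain ⟨rest, hrest⟩ := ih (acc ++ [_])
      exact ⟨_, by rw [hrest, List.append_assoc]⟩

lemma doubleAux_spec (harr : ∀ ρ, arr ρ ≤ dl ρ) :
    ∀ (l : List Req) (acc : List (Finset V × ℝ)),
    GoodSched par c node arr dl acc →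
    (∀ s ∈ acc, ∀ γ ∈ l, s.2 < dl γ) →
    l.Pairwise (fun a b => dl a < dl b) →
    GoodSched par c node arr dl (doubleAux par c node arr dl l acc) ∧
    ∀ γ ∈ l, ∃ s ∈ doubleAux par c node arr dl l acc,
      SatisfiedBy node arr dl s.1 s.2 γ := by
  intro l
  induction l with
  | nil =>
    intro acc hG _ _
    rw [doubleAux]
    exact ⟨hG, by simp⟩
  | cons ρ tl ih =>
    intro acc hG hacc hsort
    rw [doubleAux]
    split
    · next hsat =>
      have IH := ih acc hG (fun s hs γ hγ => hacc s hs γ (List.mem_cons_of_mem ρ hγ))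
        (List.pairwise_cons.1 hsort).2
      refine ⟨IH.1, fun γ hγ => ?_⟩
      rcases List.mem_cons.1 hγ with rfl | hγ'
      · obtain ⟨s, hs, hsat'⟩ := hsat
        obtain ⟨rest, hrest⟩ := doubleAux_append (par := par) (c := c) tl acc
        exact ⟨s, by rw [hrest]; exact List.mem_append_left _ hs, hsat'⟩
      · exact IH.2 γ hγ'
    · next hsat =>
      push_neg at hsat
      set T := doubleServiceAux par c node arr dl acc (dl ρ)
        (serviceCost c (rootPath par (node ρ))) (sortedReqs dl) (rootPath par (node ρ))
        with hTdef
      have hlen : (acc ++ [(T, dl ρ)]).length = acc.length + 1 := by simp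
      have hG' : GoodSched par c node arr dl (acc ++ [(T, dl ρ)]) := by
        constructor
        · refine List.pairwise_append.2 ⟨hG.1, List.pairwise_singleton _ _, ?_⟩
          intro s hs s' hs'
          rw [List.mem_singleton] at hs'
          subst hs'
          exact hacc s hs ρ List.mem_cons_self
        · intro i hi
          rcases Nat.lt_succ_iff_lt_or_eq.1 (by rw [hlen] at hi; exact hi) with h | h
          · obtain ⟨ρ', h1, h2, h3⟩ := hG.2 i h
            refine ⟨ρ', ?_, ?_, ?_⟩
            · simpa only [List.get_eq_getElem, List.getElem_append_left h] using h1
            · rw [List.take_append_of_le_length h.le]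
              exact h2
            · simp only [List.get_eq_getElem, List.getElem_append_left h,
                List.take_append_of_le_length h.le]
              exact h3
          · subst h
            refine ⟨ρ, ?_, ?_, ?_⟩
            · simp only [List.get_eq_getElem, List.getElem_concat_length]
            · rw [List.take_left]
              exact fun s hs => hsat s hs
            · simp only [List.get_eq_getElem, List.getElem_concat_length, List.take_left]
              exact hTdef
      have hacc' : ∀ s ∈ acc ++ [(T, dl ρ)], ∀ γ ∈ tl, s.2 < dl γ := by
        intro s hs γ hγ
        rcases List.mem_append.1 hs with h | h
        · exact hacc s h γ (List.mem_cons_of_mem ρ hγ)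
        · rw [List.mem_singleton] at h
          subst h
          exact (List.pairwise_cons.1 hsort).1 γ hγ
      have IH := ih (acc ++ [(T, dl ρ)]) hG' hacc' (List.pairwise_cons.1 hsort).2
      refine ⟨IH.1, fun γ hγ => ?_⟩
      rcases List.mem_cons.1 hγ with rfl | hγ'
      · obtain ⟨rest, hrest⟩ := doubleAux_append (par := par) (c := c) tl (acc ++ [(T, dl γ)])
        refine ⟨(T, dl γ), ?_, ?_⟩
        · rw [hrest]
          exact List.mem_append_left _ (List.mem_append_right _ (List.mem_singleton.2 rfl))
        · exact ⟨dsa_subset _ _ (self_mem_rootPath par (node γ)), harr γ, le_refl _⟩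
      · exact IH.2 γ hγ'

lemma double_good (harr : ∀ ρ, arr ρ ≤ dl ρ) (hdl : Function.Injective dl) :
    GoodSched par c node arr dl (double par c node arr dl) ∧
    ∀ γ : Req, ∃ s ∈ double par c node arr dl, SatisfiedBy node arr dl s.1 s.2 γ := by
  have h := doubleAux_spec (par := par) (c := c) (node := node) harr (sortedReqs dl) []
    ⟨List.Pairwise.nil, fun i hi => absurd hi (by simp)⟩ (by simp)
    (sortedReqs_strict hdl)
  exact ⟨h.1, fun γ => h.2 γ (mem_sortedReqs dl γ)⟩

end DA

section Chain
variable {par : V → V} {c : V → ℝ} {node : Req → V} {arr dl : Req → ℝ}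

lemma get_mem_take {α : Type*} {l : List α} {j k : ℕ} (hk : k < l.length) (hkj : k < j) :
    l.get ⟨k, hk⟩ ∈ l.take j := by
  have h' : k < (l.take j).length := by simp only [List.length_take]; omega
  have : (l.take j)[k] = l[k] := List.getElem_take ..
  simpa only [List.get_eq_getElem] using this ▸ List.getElem_mem h'

lemma mem_take_mono {α : Type*} {l : List α} {i j : ℕ} (hij : i ≤ j) {s : α}
    (hs : s ∈ l.take i) : s ∈ l.take j := by
  rw [← Nat.min_eq_left hij, ← List.take_take] at hs
  exact List.take_subset i _ hs

lemma good_closed {sched : List (Finset V × ℝ)}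
    (hG : GoodSched par c node arr dl sched) {k : ℕ} (hk : k < sched.length) :
    ∀ u ∈ (sched.get ⟨k, hk⟩).1, par u ∈ (sched.get ⟨k, hk⟩).1 := by
  obtain ⟨ρ', -, -, heq⟩ := hG.2 k hk
  rw [heq]
  exact dsa_closed _ _ fun u hu => par_mem_rootPath hu

lemma chain_lemma (hc : ∀ v, 0 < c v) (hdl : Function.Injective dl)
    (hcomp : ∀ v w : V, v ∈ rootPath par w ∨ w ∈ rootPath par v)
    {sched : List (Finset V × ℝ)}
    (hG : GoodSched par c node arr dl sched)
    (hsat : ∀ γ : Req, ∃ s ∈ sched, SatisfiedBy node arr dl s.1 s.2 γ)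
    {i j : ℕ} (hi : i < sched.length) (hj : j < sched.length) (hij : i < j)
    {ρ σ : Req}
    (h1 : (sched.get ⟨i, hi⟩).2 = dl ρ)
    (h2 : (sched.get ⟨i, hi⟩).1 = doubleServiceAux par c node arr dl (sched.take i) (dl ρ)
        (serviceCost c (rootPath par (node ρ))) (sortedReqs dl) (rootPath par (node ρ)))
    (h3 : (sched.get ⟨j, hj⟩).2 = dl σ)
    (h4 : ∀ s ∈ sched.take j, ¬ SatisfiedBy node arr dl s.1 s.2 σ)
    (h5 : arr σ ≤ dl ρ) :
    2 * serviceCost c (rootPath par (node ρ)) < serviceCost c (rootPath par (node σ)) := by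
  have htimes := List.pairwise_iff_get.1 hG.1
  have htt : dl ρ < dl σ := by
    have := htimes ⟨i, hi⟩ ⟨j, hj⟩ hij
    rwa [h1, h3] at this
  have hσi : ¬ SatisfiedBy node arr dl (sched.get ⟨i, hi⟩).1 (dl ρ) σ := by
    have := h4 _ (get_mem_take hi hij)
    rwa [h1] at this
  have hprior : ∀ s ∈ sched.take i, ¬ SatisfiedBy node arr dl s.1 s.2 σ :=
    fun s hs => h4 s (mem_take_mono hij.le hs)
  have hBnn : 0 ≤ serviceCost c (rootPath par (node ρ)) := serviceCost_nonneg hc _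
  rw [h2] at hσi
  obtain ⟨γ', w1, w2, w3, w4, w5, w6⟩ := dsa_witness hcomp (sortedReqs dl)
    (sortedReqs_sorted dl) (rootPath par (node ρ)) (fun u hu => par_mem_rootPath hu)
    (by linarith) σ (mem_sortedReqs dl σ) h5 htt.le hprior hσi
  have hgoal : 2 * serviceCost c (rootPath par (node ρ)) <
      serviceCost c (rootPath par (node γ')) := w6
  suffices hsub : rootPath par (node γ') ⊆ rootPath par (node σ) from
    hgoal.trans_le (serviceCost_mono hc hsub)
  by_contra hns
  have hσγ : node σ ∈ rootPath par (node γ') := by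
    rcases hcomp (node γ') (node σ) with h | h
    · exact absurd (rootPath_subset_of_mem h) hns
    · exact h
  have hne : γ' ≠ σ := fun he => hns (he ▸ subset_rfl)
  have hlt : dl γ' < dl σ := lt_of_le_of_ne w5 fun he => hne (hdl he)
  obtain ⟨s, hsmem, hsat'⟩ := hsat γ'
  obtain ⟨⟨k, hk⟩, rfl⟩ := List.mem_iff_get.1 hsmem
  have hik : i < k := by
    rcases lt_trichotomy k i with h | h | h
    · exact absurd hsat' (w3 _ (get_mem_take hk h))
    · exfalso
      apply w4
      have : (⟨k, hk⟩ : Fin sched.length) = ⟨i, hi⟩ := by simp [h]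
      rw [this] at hsat'
      rw [h1] at hsat'
      rwa [h2] at hsat'
    · exact h
  have htk : dl ρ < (sched.get ⟨k, hk⟩).2 := by
    have := htimes ⟨i, hi⟩ ⟨k, hk⟩ hik
    rwa [h1] at this
  have htk2 : (sched.get ⟨k, hk⟩).2 ≤ dl γ' := hsat'.2.2
  have hkj : k < j := by
    by_contra hle
    push_neg at hle
    rcases eq_or_lt_of_le hle with h | h
    · have : (⟨j, hj⟩ : Fin sched.length) = ⟨k, hk⟩ := by simp [h]
      rw [← this, h3] at htk2
      linarith
    · have := htimes ⟨j, hj⟩ ⟨k, hk⟩ h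
      rw [h3] at this
      linarith
  have hnodeσ : node σ ∈ (sched.get ⟨k, hk⟩).1 :=
    rootPath_subset_closed (good_closed hG hk) hsat'.1 hσγ
  exact h4 _ (get_mem_take hk hkj) ⟨hnodeσ, h5.trans htk.le, htk2.trans hlt.le⟩

end Chain

section Counting

lemma geom_sum_bound {ι : Type*} [LinearOrder ι] (B : ι → ℝ) (I : Finset ι) :
    ∀ C : ℝ, 0 ≤ C → (∀ i ∈ I, B i ≤ C) →
    (∀ i ∈ I, ∀ j ∈ I, i < j → 2 * B i < B j) →
    ∑ i ∈ I, B i ≤ (2 - (2 : ℝ) ^ (1 - (I.card : ℤ))) * C := by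
  classical
  induction I using Finset.induction_on_max with
  | empty => intro C hC _ _; simp
  | insert a s hmax ih =>
    intro C hC hle hdb
    have hanotmem : a ∉ s := fun h => absurd (hmax a h) (lt_irrefl a)
    have ha : a ∈ insert a s := Finset.mem_insert_self a s
    have hBa : B a ≤ C := hle a ha
    have hs2 : ∀ i ∈ s, B i ≤ C / 2 := fun i hi => by
      have := hdb i (Finset.mem_insert_of_mem hi) a ha (hmax i hi)
      linarith
    have hrec := ih (C / 2) (by linarith) hs2 fun i hi j hj hij =>
      hdb i (Finset.mem_insert_of_mem hi) j (Finset.mem_insert_of_mem hj) hij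
    rw [Finset.sum_insert hanotmem, Finset.card_insert_of_notMem hanotmem]
    have hz : (2 : ℝ) ^ (1 - ((s.card : ℤ) + 1)) = (2 : ℝ) ^ (1 - (s.card : ℤ)) / 2 := by
      rw [show (1 : ℤ) - ((s.card : ℤ) + 1) = (1 - (s.card : ℤ)) - 1 by ring,
        zpow_sub_one₀ (by norm_num : (2:ℝ) ≠ 0)]
      ring
    have hcast : (1 : ℤ) - ((s.card + 1 : ℕ) : ℤ) = 1 - ((s.card : ℤ) + 1) := by push_cast; ring
    rw [hcast, hz]
    linarith

lemma card_le_of_level {ι : Type*} [LinearOrder ι] (I : Finset ι) (g : ι → ℕ) (D : ℕ)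
    (h1 : ∀ i ∈ I, 1 ≤ g i) (h2 : ∀ i ∈ I, g i ≤ D)
    (hmono : ∀ i ∈ I, ∀ j ∈ I, i < j → g i < g j) : I.card ≤ D := by
  classical
  have hinj : Set.InjOn g I := by
    intro i hi j hj he
    rcases lt_trichotomy i j with h | h | h
    · exact absurd he (hmono i hi j hj h).ne
    · exact h
    · exact absurd he.symm (hmono j hj i hi h).ne
  calc I.card = (I.image g).card := (Finset.card_image_of_injOn hinj).symm
    _ ≤ (Finset.Icc 1 D).card := Finset.card_le_card (by
        intro x hx
        obtain ⟨i, hi, rfl⟩ := Finset.mem_image.1 hx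
        exact Finset.mem_Icc.2 ⟨h1 i hi, h2 i hi⟩)
    _ = D := by rw [Nat.card_Icc]; omega

lemma scheduleCost_eq_sum_get (c : V → ℝ) (L : List (Finset V × ℝ)) :
    scheduleCost c L = ∑ i : Fin L.length, serviceCost c (L.get i).1 := by
  rw [scheduleCost]
  conv_lhs => rw [← List.ofFn_get L]
  rw [List.map_ofFn, List.sum_ofFn]
  simp [Function.comp]

end Counting
/-- **Theorem 2**: Double is `(4 - 2^{-D})`-competitive on paths of depth `D`. -/
theorem double_competitive_on_paths
    (r : V) (par : V → V) (c : V → ℝ) (node : Req → V) (arr dl : Req → ℝ)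
    (hroot : par r = r) (hreach : ∀ v : V, ∃ n : ℕ, par^[n] v = r)
    (hc : ∀ v, 0 < c v) (harr : ∀ ρ, arr ρ ≤ dl ρ) (hdl : Function.Injective dl)
    (hpath : ∃ u : ℕ → V, u 0 = r ∧
      (∀ i : ℕ, i + 1 < depth par → par (u (i + 1)) = u i) ∧
      (∀ i j : ℕ, i < depth par → j < depth par → u i = u j → i = j) ∧
      (∀ v : V, ∃ i : ℕ, i < depth par ∧ u i = v))
    (OPT : List (Finset V × ℝ)) (hOPT : Feasible r par node arr dl OPT) :
    scheduleCost c (double par c node arr dl) ≤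
      (4 - (2 : ℝ) ^ (-(depth par : ℤ))) * scheduleCost c OPT := by
  classical
  have hcomp := rootPath_comparable hpath
  obtain ⟨hG, hsatAll⟩ := double_good (par := par) (c := c) (node := node) harr hdl
  set sched := double par c node arr dl with hsched
  set n := sched.length with hn
  have hspec := fun i : Fin n => (hG.2 i.1 i.2).choose_spec
  set ρf : Fin n → Req := fun i => (hG.2 i.1 i.2).choose with hρf
  set Bf : Fin n → ℝ := fun i => serviceCost c (rootPath par (node (ρf i))) with hBf
  have hF : ∀ i : Fin n, ∃ k : Fin OPT.length,
      SatisfiedBy node arr dl (OPT.get k).1 (OPT.get k).2 (ρf i) := by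
    intro i
    obtain ⟨s, hs, hsat⟩ := hOPT.2 (ρf i)
    obtain ⟨k, hk⟩ := List.mem_iff_get.1 hs
    exact ⟨k, hk ▸ hsat⟩
  choose F hFs using hF
  have hBnn : ∀ i, 0 ≤ Bf i := fun i => serviceCost_nonneg hc _
  have hBpos : ∀ i, 0 < Bf i := fun i =>
    serviceCost_pos hc ⟨node (ρf i), self_mem_rootPath par (node (ρf i))⟩
  have hcost : ∀ i : Fin n, serviceCost c (sched.get i).1 ≤ 2 * Bf i := by
    intro i
    rw [show sched.get i = sched.get ⟨i.1, i.2⟩ from rfl, (hspec i).2.2]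
    refine dsa_cost _ _ ?_
    show serviceCost c (rootPath par (node (ρf i))) ≤ 2 * serviceCost c (rootPath par (node (ρf i)))
    have := serviceCost_nonneg hc (rootPath par (node (ρf i)))
    linarith
  have hchain : ∀ i j : Fin n, F i = F j → i < j → 2 * Bf i < Bf j := by
    intro i j hFij hij
    have s1 := hFs i
    have s2 := hFs j
    rw [hFij] at s1
    exact chain_lemma hc hdl hcomp hG hsatAll i.2 j.2 hij (hspec i).1 (hspec i).2.2
      (hspec j).1 (hspec j).2.1 (s2.2.1.trans s1.2.2)
  have hBle : ∀ i : Fin n, Bf i ≤ serviceCost c (OPT.get (F i)).1 := fun i =>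
    serviceCost_mono hc (rootPath_subset_closed
      (hOPT.1 (OPT.get (F i)) (by exact List.get_mem OPT (F i))).2 (hFs i).1)
  have hD1 : 1 ≤ depth par := le_trans (one_le_level par r) (level_le_depth par r)
  rw [scheduleCost_eq_sum_get c sched,
    ← Finset.sum_fiberwise Finset.univ F (fun i => serviceCost c (sched.get i).1),
    scheduleCost_eq_sum_get c OPT, Finset.mul_sum]
  apply Finset.sum_le_sum
  intro k _
  set I := Finset.univ.filter (fun i => F i = k) with hI
  set C := serviceCost c (OPT.get k).1 with hC
  have hCnn : 0 ≤ C := serviceCost_nonneg hc _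
  have hIk : ∀ i ∈ I, F i = k := fun i hi => (Finset.mem_filter.1 hi).2
  have hcard : I.card ≤ depth par := by
    apply card_le_of_level I (fun i => level par (node (ρf i))) (depth par)
      (fun i _ => one_le_level par _) (fun i _ => level_le_depth par _)
    intro i hi j hj hij
    have hch := hchain i j ((hIk i hi).trans (hIk j hj).symm) hij
    have hBij : Bf i < Bf j := by have := hBpos i; linarith
    have hsub : rootPath par (node (ρf i)) ⊆ rootPath par (node (ρf j)) := by
      rcases hcomp (node (ρf i)) (node (ρf j)) with h | h
      · exact rootPath_subset_of_mem h
      · exact absurd (serviceCost_mono hc (rootPath_subset_of_mem h)) (not_le.2 hBij)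
    have hss : rootPath par (node (ρf i)) ⊂ rootPath par (node (ρf j)) :=
      hsub.ssubset_of_ne (fun he => by rw [hBf] at hBij; simp only [he] at hBij; exact lt_irrefl _ hBij)
    exact Finset.card_lt_card hss
  have hgeom := geom_sum_bound Bf I C hCnn
    (fun i hi => le_trans (hBle i) (le_of_eq (by rw [hIk i hi])))
    (fun i hi j hj hij => hchain i j ((hIk i hi).trans (hIk j hj).symm) hij)
  have hx : (0:ℝ) < (2 : ℝ) ^ (1 - (I.card : ℤ)) := zpow_pos (by norm_num) _
  have hxy : (2 : ℝ) ^ (-(depth par : ℤ)) ≤ (2 : ℝ) ^ (1 - (I.card : ℤ)) := by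
    apply zpow_le_zpow_right₀ one_le_two
    omega
  calc ∑ i ∈ I, serviceCost c (sched.get i).1 ≤ ∑ i ∈ I, 2 * Bf i :=
        Finset.sum_le_sum fun i _ => hcost i
    _ = 2 * ∑ i ∈ I, Bf i := by rw [Finset.mul_sum]
    _ ≤ 2 * ((2 - (2 : ℝ) ^ (1 - (I.card : ℤ))) * C) := by linarith
    _ ≤ (4 - (2 : ℝ) ^ (-(depth par : ℤ))) * C := by nlinarith
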